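/- There is no completely positive trace-preserving map Λ on 4×4 complex matrices that maps separable two-qubit states to separable two-qubit states and satisfies Λ(ρ_λ) = σ_λ for λ ∈ (2/3,1), where ρ_λ = λΦ₁ + (1−λ)|01⟩⟨01| and σ_λ = λΦ₁ + (1−λ)Φ₃. -/

import Mathlib

open Matrix Complex BigOperators
open scoped ComplexOrder

noncomputable section

/-- Standard basis ket of ℂ⁴ -/
def ket (k : Fin 4) : Fin 4 → ℂ := fun j => if j = k then 1 else 0

/-- Tensor product of two qubit vectors, with |ij⟩ ↦ index 2i+j -/
def tens (ψ χ : Fin 2 → ℂ) : Fin 4 → ℂ :=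
  ![ψ 0 * χ 0, ψ 0 * χ 1, ψ 1 * χ 0, ψ 1 * χ 1]

/-- Outer product |v⟩⟨v| -/
def proj (v : Fin 4 → ℂ) : Matrix (Fin 4) (Fin 4) ℂ :=
  Matrix.of fun i j => v i * star (v j)

/-- A qubit vector is a unit vector -/
def unit2 (ψ : Fin 2 → ℂ) : Prop := ∑ j, Complex.normSq (ψ j) = 1

/-- The four Bell vectors -/
def Bell : Fin 4 → (Fin 4 → ℂ) :=
  ![![1 / (Real.sqrt 2 : ℂ), 0, 0, 1 / (Real.sqrt 2 : ℂ)],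
    ![1 / (Real.sqrt 2 : ℂ), 0, 0, -(1 / (Real.sqrt 2 : ℂ))],
    ![0, 1 / (Real.sqrt 2 : ℂ), 1 / (Real.sqrt 2 : ℂ), 0],
    ![0, -(1 / (Real.sqrt 2 : ℂ)), 1 / (Real.sqrt 2 : ℂ), 0]]

/-- Bell projectors Φᵢ (indexed from 0: `Phi 0` is Φ₁, etc.) -/
def Phi (i : Fin 4) : Matrix (Fin 4) (Fin 4) ℂ := proj (Bell i)

/-- Separability of a two-qubit (4×4) matrix -/
def IsSepState (ρ : Matrix (Fin 4) (Fin 4) ℂ) : Prop :=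
  ∃ (n : ℕ) (p : Fin n → ℝ) (ψ χ : Fin n → Fin 2 → ℂ),
    (∀ i, 0 ≤ p i) ∧ (∑ i, p i = 1) ∧ (∀ i, unit2 (ψ i)) ∧ (∀ i, unit2 (χ i)) ∧
    ρ = ∑ i, (p i : ℂ) • proj (tens (ψ i) (χ i))

/-- Density matrix -/
def IsState (ρ : Matrix (Fin 4) (Fin 4) ℂ) : Prop := ρ.PosSemidef ∧ ρ.trace = 1

/-- Complete positivity of a linear map on 4×4 matrices. -/
def IsCompletelyPositive
    (Λ : Matrix (Fin 4) (Fin 4) ℂ →ₗ[ℂ] Matrix (Fin 4) (Fin 4) ℂ) : Prop :=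
  ∀ (n : ℕ) (M : Matrix (Fin n × Fin 4) (Fin n × Fin 4) ℂ), M.PosSemidef →
    (Matrix.of fun (p q : Fin n × Fin 4) =>
      Λ (Matrix.of fun a b => M (p.1, a) (q.1, b)) p.2 q.2).PosSemidef


/-!
Put `D = Λ Φ₁`, `A = Λ |01⟩⟨01|`, `B = Λ |10⟩⟨10|`. Every separable state has fidelity at most
`1/2` with a Bell state, and `½ Φ₁ + ¼ |01⟩⟨01| + ¼ |10⟩⟨10|` is separable, so
`½ ⟨Φ₁|D|Φ₁⟩ + ¼ ⟨Φ₁|A|Φ₁⟩ + ¼ ⟨Φ₁|B|Φ₁⟩ ≤ ½`. Together with the `Φ₁`-component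
`λ ⟨Φ₁|D|Φ₁⟩ + (1-λ) ⟨Φ₁|A|Φ₁⟩ = λ` of `Λ ρ_λ = σ_λ` and positivity this forces, for `λ > 2/3`,
`⟨Φ₁|A|Φ₁⟩ = 0` and `⟨Φ₁|D|Φ₁⟩ = 1`. Since `D` is a state, `⟨Φ₃|D|Φ₃⟩ = 0`, and the
`Φ₃`-component of `Λ ρ_λ = σ_λ` then gives `⟨Φ₃|A|Φ₃⟩ = 1 > 1/2`, although `A` is separable.
-/

theorem IsCompletelyPositive.map_posSemidef
    {Λ : Matrix (Fin 4) (Fin 4) ℂ →ₗ[ℂ] Matrix (Fin 4) (Fin 4) ℂ}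
    (hΛ : IsCompletelyPositive Λ) {X : Matrix (Fin 4) (Fin 4) ℂ} (hX : X.PosSemidef) :
    (Λ X).PosSemidef :=
  (hΛ 1 (X.submatrix Prod.snd Prod.snd) (hX.submatrix _)).submatrix fun i => ((0 : Fin 1), i)

theorem proj_eq_vecMulVec (w : Fin 4 → ℂ) : proj w = vecMulVec w (star w) := rfl

theorem posSemidef_proj (w : Fin 4 → ℂ) : (proj w).PosSemidef :=
  posSemidef_vecMulVec_self_star w

section Expectation

variable {n : Type*} [Fintype n]

def expect (v : n → ℂ) (X : Matrix n n ℂ) : ℝ := (star v ⬝ᵥ (X *ᵥ v)).re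

theorem expect_add (v : n → ℂ) (X Y : Matrix n n ℂ) :
    expect v (X + Y) = expect v X + expect v Y := by
  simp [expect, add_mulVec]

theorem expect_ofReal_smul (v : n → ℂ) (r : ℝ) (X : Matrix n n ℂ) :
    expect v ((r : ℂ) • X) = r * expect v X := by
  simp [expect, smul_mulVec, dotProduct_smul]

theorem expect_sum {ι : Type*} (s : Finset ι) (v : n → ℂ) (X : ι → Matrix n n ℂ) :
    expect v (∑ i ∈ s, X i) = ∑ i ∈ s, expect v (X i) := by
  simp [expect, sum_mulVec, dotProduct_sum]

theorem expect_vecMulVec (v w : n → ℂ) :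
    expect v (vecMulVec w (star w)) = Complex.normSq (star v ⬝ᵥ w) := by
  have h : star v ⬝ᵥ (vecMulVec w (star w) *ᵥ v) = (star v ⬝ᵥ w) * star (star v ⬝ᵥ w) := by
    rw [vecMulVec_mulVec, ← star_dotProduct]
    simp [dotProduct, Finset.sum_mul, mul_assoc]
  rw [expect, h, Complex.star_def, Complex.mul_conj, Complex.ofReal_re]

theorem Matrix.PosSemidef.expect_nonneg {X : Matrix n n ℂ} (hX : X.PosSemidef) (v : n → ℂ) :
    0 ≤ expect v X :=
  (Complex.nonneg_iff.mp (hX.dotProduct_mulVec_nonneg v)).1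

end Expectation

theorem IsSepState.expect_le {S : Matrix (Fin 4) (Fin 4) ℂ} (hS : IsSepState S)
    {v : Fin 4 → ℂ} {c : ℝ}
    (hv : ∀ ψ χ, unit2 ψ → unit2 χ → Complex.normSq (star v ⬝ᵥ tens ψ χ) ≤ c) :
    expect v S ≤ c := by
  obtain ⟨n, p, ψ, χ, hp, hp1, hψ, hχ, rfl⟩ := hS
  simp only [expect_sum, expect_ofReal_smul, proj_eq_vecMulVec, expect_vecMulVec]
  calc ∑ i, p i * Complex.normSq (star v ⬝ᵥ tens (ψ i) (χ i))
      ≤ ∑ i, p i * c := by gcongr with i; exacts [hp i, hv _ _ (hψ i) (hχ i)]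
    _ = c := by rw [← Finset.sum_mul, hp1, one_mul]

theorem Complex.normSq_mul_add_mul_le (a b c d : ℂ) :
    normSq (a * c + b * d) ≤ (normSq a + normSq b) * (normSq c + normSq d) := by
  have lagrange : normSq (a * c + b * d) + normSq (a * star d - b * star c)
      = (normSq a + normSq b) * (normSq c + normSq d) := by
    simp only [normSq_apply, add_re, add_im, sub_re, sub_im, mul_re, mul_im, star_def,
      conj_re, conj_im]
    ring
  linarith [normSq_nonneg (a * star d - b * star c)]

theorem unit2_iff (ψ : Fin 2 → ℂ) : unit2 ψ ↔ Complex.normSq (ψ 0) + Complex.normSq (ψ 1) = 1 := by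
  rw [unit2, Fin.sum_univ_two]

theorem inv_sqrt_two_mul_self : (Real.sqrt 2 : ℂ)⁻¹ * (Real.sqrt 2 : ℂ)⁻¹ = 1 / 2 := by
  rw [← mul_inv, ← Complex.ofReal_mul, Real.mul_self_sqrt zero_le_two]
  norm_num

theorem normSq_bell_zero_dotProduct_tens_le {ψ χ : Fin 2 → ℂ} (hψ : unit2 ψ) (hχ : unit2 χ) :
    Complex.normSq (star (Bell 0) ⬝ᵥ tens ψ χ) ≤ 1 / 2 := by
  have h : star (Bell 0) ⬝ᵥ tens ψ χ = (Real.sqrt 2 : ℂ)⁻¹ * (ψ 0 * χ 0 + ψ 1 * χ 1) := by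
    simp [Bell, tens, dotProduct, Fin.sum_univ_four, Complex.conj_ofReal, mul_add]
  have hCS := Complex.normSq_mul_add_mul_le (ψ 0) (ψ 1) (χ 0) (χ 1)
  rw [(unit2_iff ψ).1 hψ, (unit2_iff χ).1 hχ, one_mul] at hCS
  rw [h, Complex.normSq_mul, Complex.normSq_inv, Complex.normSq_ofReal,
    Real.mul_self_sqrt zero_le_two]
  linarith

theorem normSq_bell_two_dotProduct_tens_le {ψ χ : Fin 2 → ℂ} (hψ : unit2 ψ) (hχ : unit2 χ) :
    Complex.normSq (star (Bell 2) ⬝ᵥ tens ψ χ) ≤ 1 / 2 := by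
  have h : star (Bell 2) ⬝ᵥ tens ψ χ = star (Bell 0) ⬝ᵥ tens ψ ![χ 1, χ 0] := by
    simp [Bell, tens, dotProduct, Fin.sum_univ_four]
  refine h ▸ normSq_bell_zero_dotProduct_tens_le hψ ?_
  simpa [unit2_iff, add_comm] using hχ

theorem star_bell_dotProduct_bell (i j : Fin 4) :
    star (Bell i) ⬝ᵥ Bell j = if i = j then 1 else 0 := by
  fin_cases i <;> fin_cases j <;>
    simp [Bell, dotProduct, Fin.sum_univ_four, Complex.conj_ofReal] <;>
    rw [inv_sqrt_two_mul_self] <;> norm_num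

theorem trace_eq_sum_bell (X : Matrix (Fin 4) (Fin 4) ℂ) :
    X.trace = ∑ i, star (Bell i) ⬝ᵥ (X *ᵥ Bell i) := by
  simp [Bell, Matrix.trace, dotProduct, mulVec, Fin.sum_univ_four, Complex.conj_ofReal]
  linear_combination (-2 * (X 0 0 + X 1 1 + X 2 2 + X 3 3)) * inv_sqrt_two_mul_self

theorem re_trace_eq_sum_expect_bell (X : Matrix (Fin 4) (Fin 4) ℂ) :
    X.trace.re = ∑ i, expect (Bell i) X := by
  rw [trace_eq_sum_bell, Complex.re_sum]
  rfl

theorem expect_bell_phi (i j : Fin 4) : expect (Bell i) (Phi j) = if i = j then 1 else 0 := by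
  rw [Phi, proj_eq_vecMulVec, expect_vecMulVec, star_bell_dotProduct_bell]
  split_ifs <;> simp

theorem re_trace_phi (i : Fin 4) : (Phi i).trace.re = 1 := by
  simp [re_trace_eq_sum_expect_bell, expect_bell_phi]

theorem isSepState_proj_tens {ψ χ : Fin 2 → ℂ} (hψ : unit2 ψ) (hχ : unit2 χ) :
    IsSepState (proj (tens ψ χ)) :=
  ⟨1, fun _ => 1, fun _ => ψ, fun _ => χ, fun _ => zero_le_one, by simp, fun _ => hψ,
    fun _ => hχ, by simp⟩

theorem isSepState_proj_ket_one : IsSepState (proj (ket 1)) := by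
  have h : ket 1 = tens ![1, 0] ![0, 1] := by
    funext j; fin_cases j <;> simp [ket, tens]
  rw [h]
  exact isSepState_proj_tens (by simp [unit2_iff]) (by simp [unit2_iff])

/-- Averaging `(|0⟩ + ω|1⟩) ⊗ (|0⟩ + ω̄|1⟩) / 2` over `ω ∈ {1, i, -1, -i}` cancels every
coherence except those between `|00⟩` and `|11⟩`. -/
theorem isSepState_bell_mixture :
    IsSepState (((1 / 2 : ℝ) : ℂ) • Phi 0 + ((1 / 4 : ℝ) : ℂ) • proj (ket 1)
      + ((1 / 4 : ℝ) : ℂ) • proj (ket 2)) := by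
  set ω : Fin 4 → ℂ := ![1, Complex.I, -1, -Complex.I]
  refine ⟨4, fun _ => 1 / 4, fun k => ![(Real.sqrt 2 : ℂ)⁻¹, ω k * (Real.sqrt 2 : ℂ)⁻¹],
    fun k => ![(Real.sqrt 2 : ℂ)⁻¹, star (ω k) * (Real.sqrt 2 : ℂ)⁻¹], fun _ => by norm_num,
    by norm_num, fun k => by fin_cases k <;> norm_num [unit2_iff, ω],
    fun k => by fin_cases k <;> norm_num [unit2_iff, ω], ?_⟩
  have hs := inv_sqrt_two_mul_self
  have hI := Complex.I_mul_I
  ext i j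
  fin_cases i <;> fin_cases j <;>
    simp [Fin.sum_univ_four, Matrix.sum_apply, proj, tens, Phi, Bell, ket, ω,
      Complex.conj_ofReal] <;>
    grind

/-- Theorem 1: no CPTP non-entangling map sends ρ_λ to σ_λ for λ ∈ (2/3,1). -/
theorem no_NE_map (l : ℝ) (hl : 2 / 3 < l) (hl1 : l < 1) :
    ¬ ∃ Λ : Matrix (Fin 4) (Fin 4) ℂ →ₗ[ℂ] Matrix (Fin 4) (Fin 4) ℂ,
      IsCompletelyPositive Λ ∧ (∀ ρ, (Λ ρ).trace = ρ.trace) ∧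
      (∀ ρ, IsSepState ρ → IsSepState (Λ ρ)) ∧
      Λ ((l : ℂ) • Phi 0 + ((1 - l : ℝ) : ℂ) • proj (ket 1))
        = (l : ℂ) • Phi 0 + ((1 - l : ℝ) : ℂ) • Phi 2 := by
  rintro ⟨Λ, hCP, hTP, hNE, hmap⟩
  rw [map_add, map_smul, map_smul] at hmap
  set D := Λ (Phi 0)
  set A := Λ (proj (ket 1))
  set B := Λ (proj (ket 2))
  have hD : D.PosSemidef := hCP.map_posSemidef (posSemidef_proj _)
  have hΦ₁ := congrArg (expect (Bell 0)) hmap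
  have hΦ₃ := congrArg (expect (Bell 2)) hmap
  simp only [expect_add, expect_ofReal_smul, expect_bell_phi, Fin.reduceEq, ↓reduceIte]
    at hΦ₁ hΦ₃
  have hA₁ : 0 ≤ expect (Bell 0) A := (hCP.map_posSemidef (posSemidef_proj _)).expect_nonneg _
  have hB₁ : 0 ≤ expect (Bell 0) B := (hCP.map_posSemidef (posSemidef_proj _)).expect_nonneg _
  have hA₃ : expect (Bell 2) A ≤ 1 / 2 :=
    (hNE _ isSepState_proj_ket_one).expect_le fun _ _ => normSq_bell_two_dotProduct_tens_le
  have hmix : 1 / 2 * expect (Bell 0) D + 1 / 4 * expect (Bell 0) A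
      + 1 / 4 * expect (Bell 0) B ≤ 1 / 2 := by
    have := (hNE _ isSepState_bell_mixture).expect_le fun _ _ => normSq_bell_zero_dotProduct_tens_le
    simpa only [map_add, map_smul, expect_add, expect_ofReal_smul] using this
  have htr : expect (Bell 0) D + expect (Bell 2) D ≤ 1 := by
    have h := re_trace_eq_sum_expect_bell D
    rw [hTP, re_trace_phi, Fin.sum_univ_four] at h
    linarith [hD.expect_nonneg (Bell 1), hD.expect_nonneg (Bell 3)]
  have hA₁0 : expect (Bell 0) A = 0 := by nlinarith
  have hD₁ : expect (Bell 0) D = 1 := by nlinarith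
  nlinarith

end
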